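/- arXiv:1209.0873 — 3 statements merged into one kernel-verified Lean document; each statement's English description precedes it below -/
import Mathlib

section
/- For every p > 1, every t ≥ 1, and all r, s ∈ (0, c_p) where c_p = arsinh_p(1), one has sinh_p(M_t(r,s)) ≤ M_t(sinh_p(r), sinh_p(s)). -/
open Real Set MeasureTheory intervalIntegral

variable {p : ℝ}

/-- Power mean `M_t(x,y)`. -/
noncomputable def powerMean (t x y : ℝ) : ℝ :=
  if t = 0 then Real.sqrt (x * y) else ((x ^ t + y ^ t) / 2) ^ (1 / t)

/-- Generalized arcsine: `arcsin_p x = ∫₀ˣ (1 - u^p)^(-1/p) du`. -/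
noncomputable def arcsinp (p x : ℝ) : ℝ := ∫ u in (0:ℝ)..x, (1 - u ^ p) ^ (-(1 / p))

/-- Generalized inverse hyperbolic tangent: `artanh_p x = ∫₀ˣ (1 - u^p)⁻¹ du`. -/
noncomputable def artanhp (p x : ℝ) : ℝ := ∫ u in (0:ℝ)..x, (1 - u ^ p)⁻¹

/-- Generalized arctangent: `arctan_p x = ∫₀ˣ (1 + u^p)⁻¹ du`. -/
noncomputable def arctanp (p x : ℝ) : ℝ := ∫ u in (0:ℝ)..x, (1 + u ^ p)⁻¹

/-- Generalized inverse hyperbolic sine: `arsinh_p x = ∫₀ˣ (1 + u^p)^(-1/p) du`. -/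
noncomputable def arsinhp (p x : ℝ) : ℝ := ∫ u in (0:ℝ)..x, (1 + u ^ p) ^ (-(1 / p))

/-- Generalized pi: `π_p = 2π/(p sin(π/p))`. -/
noncomputable def pip (p : ℝ) : ℝ := 2 * Real.pi / (p * Real.sin (Real.pi / p))





/-- integrand -/
noncomputable def gp (p u : ℝ) : ℝ := (1 + u ^ p) ^ (-(1 / p))

lemma one_add_pos (hp : 0 < p) {u : ℝ} (hu : 0 ≤ u) : 0 < 1 + u ^ p := by
  have := Real.rpow_nonneg hu p; linarith

lemma gp_pos (hp : 0 < p) {u : ℝ} (hu : 0 ≤ u) : 0 < gp p u :=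
  Real.rpow_pos_of_pos (one_add_pos hp hu) _

lemma gp_antitoneOn (hp : 0 < p) : AntitoneOn (gp p) (Ici 0) := by
  intro a ha b hb hab
  exact Real.rpow_le_rpow_of_nonpos (one_add_pos hp ha)
    (by have := Real.rpow_le_rpow ha hab hp.le; linarith)
    (neg_nonpos.mpr (by positivity))

lemma gp_contAt (hp : 0 < p) {u : ℝ} (hu : 0 ≤ u) : ContinuousAt (gp p) u := by
  have h1 : ContinuousAt (fun u : ℝ => 1 + u ^ p) u :=
    continuousAt_const.add (Real.continuousAt_rpow_const u p (Or.inr hp.le))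
  exact h1.rpow_const (Or.inl (one_add_pos hp hu).ne')




lemma gp_intInt (hp : 0 < p) {a b : ℝ} (ha : 0 ≤ a) (hb : 0 ≤ b) :
    IntervalIntegrable (gp p) volume a b := by
  apply ContinuousOn.intervalIntegrable
  intro u hu
  have hu0 : 0 ≤ u := by
    rcases le_total a b with h | h
    · rw [uIcc_of_le h] at hu; exact le_trans ha hu.1
    · rw [uIcc_of_ge h] at hu; exact le_trans hb hu.1
  exact (gp_contAt hp hu0).continuousWithinAt

lemma arsinhp_eq (x : ℝ) : arsinhp p x = ∫ u in (0:ℝ)..x, gp p u := rfl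

lemma arsinhp_hasDerivAt (hp : 0 < p) {x : ℝ} (hx : 0 < x) :
    HasDerivAt (arsinhp p) (gp p x) x := by
  have hmeas : StronglyMeasurableAtFilter (gp p) (nhds x) :=
    ContinuousAt.stronglyMeasurableAtFilter isOpen_Ioi
      (fun u (hu : u ∈ Ioi (0:ℝ)) => gp_contAt hp (le_of_lt hu)) x hx
  exact intervalIntegral.integral_hasDerivAt_right (gp_intInt hp le_rfl hx.le) hmeas
    (gp_contAt hp hx.le)

lemma arsinhp_add (hp : 0 < p) {a b : ℝ} (ha : 0 ≤ a) (hab : a ≤ b) :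
    arsinhp p b = arsinhp p a + ∫ u in a..b, gp p u := by
  rw [arsinhp_eq, arsinhp_eq,
    ← intervalIntegral.integral_add_adjacent_intervals (gp_intInt hp le_rfl ha)
      (gp_intInt hp ha (le_trans ha hab))]

lemma arsinhp_strictMonoOn (hp : 0 < p) : StrictMonoOn (arsinhp p) (Ici 0) := by
  intro a ha b hb hab
  rw [arsinhp_add hp ha hab.le]
  have : 0 < ∫ u in a..b, gp p u := by
    apply intervalIntegral.intervalIntegral_pos_of_pos_on
      (gp_intInt hp ha hb) _ hab
    intro u hu
    exact gp_pos hp (le_trans ha hu.1.le)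
  linarith

lemma arsinhp_pos (hp : 0 < p) {x : ℝ} (hx : 0 < x) : 0 < arsinhp p x := by
  have h0 : arsinhp p 0 = 0 := by
    rw [arsinhp_eq, intervalIntegral.integral_same]
  have := arsinhp_strictMonoOn hp (self_mem_Ici) (le_of_lt hx : (0:ℝ) ≤ x) hx
  rwa [h0] at this

lemma arsinhp_div_antitone (hp : 0 < p) {a b : ℝ} (ha : 0 < a) (hab : a ≤ b) :
    arsinhp p b / b ≤ arsinhp p a / a := by
  have hb : 0 < b := lt_of_lt_of_le ha hab
  rw [div_le_div_iff₀ hb ha]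
  have hadd := arsinhp_add hp ha.le hab
  have I1 : (∫ u in a..b, gp p u) ≤ (b - a) * gp p a := by
    have : (∫ u in a..b, gp p u) ≤ ∫ _u in a..b, gp p a := by
      apply intervalIntegral.integral_mono_on hab (gp_intInt hp ha.le hb.le)
        intervalIntegrable_const
      intro u hu
      exact gp_antitoneOn hp ha.le (le_trans ha.le hu.1) hu.1
    simpa [smul_eq_mul, mul_comm] using this
  have I2 : a * gp p a ≤ arsinhp p a := by
    have : (∫ _u in (0:ℝ)..a, gp p a) ≤ ∫ u in (0:ℝ)..a, gp p u := by
      apply intervalIntegral.integral_mono_on ha.le intervalIntegrable_const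
        (gp_intInt hp le_rfl ha.le)
      intro u hu
      exact gp_antitoneOn hp hu.1 ha.le hu.2
    rw [arsinhp_eq]
    simpa [smul_eq_mul, mul_comm] using this
  have hFa : 0 < arsinhp p a := arsinhp_pos hp ha
  have hga : 0 < gp p a := gp_pos hp ha.le
  nlinarith [mul_le_mul_of_nonneg_left I1 ha.le,
    mul_le_mul_of_nonneg_left I2 (sub_nonneg.mpr hab)]




lemma G_hasDerivAt (hp : 0 < p) {t : ℝ} (ht : 1 ≤ t) {u : ℝ} (hu : u ∈ Ioo (0:ℝ) 1) :
    HasDerivAt (fun u : ℝ => (arsinhp p (u ^ (1/t))) ^ t)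
      ((arsinhp p (u^(1/t)) / (u^(1/t)))^(t-1) * gp p (u^(1/t))) u := by
  have ht0 : (0:ℝ) < t := lt_of_lt_of_le one_pos ht
  set v := u ^ (1/t) with hv
  have hv0 : 0 < v := Real.rpow_pos_of_pos hu.1 _
  have hFv : 0 < arsinhp p v := arsinhp_pos hp hv0
  have h1 : HasDerivAt (fun u : ℝ => u ^ (1/t)) ((1/t) * u ^ (1/t - 1)) u :=
    Real.hasDerivAt_rpow_const (Or.inl hu.1.ne')
  have h2 : HasDerivAt (arsinhp p) (gp p v) v := arsinhp_hasDerivAt hp hv0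
  have h3 : HasDerivAt (fun z : ℝ => z ^ t) (t * (arsinhp p v) ^ (t-1)) (arsinhp p v) :=
    Real.hasDerivAt_rpow_const (Or.inl hFv.ne')
  have hcomp := (h3.comp v h2).comp u h1
  refine hcomp.congr_deriv ?_
  have e1 : u ^ (1/t - 1) = v ^ (1 - t) := by
    rw [hv, ← Real.rpow_mul hu.1.le]
    congr 1
    field_simp
  have e2 : (arsinhp p v / v) ^ (t-1) = (arsinhp p v)^(t-1) * v^(1-t) := by
    rw [Real.div_rpow hFv.le hv0.le, div_eq_mul_inv, ← Real.rpow_neg hv0.le, neg_sub]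
  rw [e2, e1]
  field_simp

lemma G_concave (hp : 0 < p) {t : ℝ} (ht : 1 ≤ t) :
    ConcaveOn ℝ (Ioo (0:ℝ) 1) (fun u => (arsinhp p (u ^ (1/t))) ^ t) := by
  have ht0 : (0:ℝ) < t := lt_of_lt_of_le one_pos ht
  apply AntitoneOn.concaveOn_of_deriv (convex_Ioo 0 1)
  · exact fun u hu => ((G_hasDerivAt hp ht hu).continuousAt).continuousWithinAt
  · rw [interior_Ioo]
    exact fun u hu => ((G_hasDerivAt hp ht hu).differentiableAt).differentiableWithinAt
  · rw [interior_Ioo]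
    intro u1 h1 u2 h2 h12
    rw [(G_hasDerivAt hp ht h1).deriv, (G_hasDerivAt hp ht h2).deriv]
    set v1 := u1 ^ (1/t) with hv1
    set v2 := u2 ^ (1/t) with hv2
    have hv10 : 0 < v1 := Real.rpow_pos_of_pos h1.1 _
    have hv20 : 0 < v2 := Real.rpow_pos_of_pos h2.1 _
    have hvle : v1 ≤ v2 := Real.rpow_le_rpow h1.1.le h12 (by positivity)
    have hq : arsinhp p v2 / v2 ≤ arsinhp p v1 / v1 :=
      arsinhp_div_antitone hp hv10 hvle
    have hq2 : (0:ℝ) ≤ arsinhp p v2 / v2 :=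
      le_of_lt (div_pos (arsinhp_pos hp hv20) hv20)
    apply mul_le_mul
    · exact Real.rpow_le_rpow hq2 hq (by linarith)
    · exact gp_antitoneOn hp hv10.le hv20.le hvle
    · exact (gp_pos hp hv20.le).le
    · exact Real.rpow_nonneg (le_trans hq2 hq) _

lemma key (hp : 0 < p) {t : ℝ} (ht : 1 ≤ t) {x y : ℝ} (hx : x ∈ Ioo (0:ℝ) 1)
    (hy : y ∈ Ioo (0:ℝ) 1) :
    ((arsinhp p x ^ t + arsinhp p y ^ t)/2) ^ (1/t)
      ≤ arsinhp p (((x^t + y^t)/2) ^ (1/t)) := by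
  have ht0 : (0:ℝ) < t := lt_of_lt_of_le one_pos ht
  have hxt : x^t ∈ Ioo (0:ℝ) 1 :=
    ⟨Real.rpow_pos_of_pos hx.1 _, Real.rpow_lt_one hx.1.le hx.2 ht0⟩
  have hyt : y^t ∈ Ioo (0:ℝ) 1 :=
    ⟨Real.rpow_pos_of_pos hy.1 _, Real.rpow_lt_one hy.1.le hy.2 ht0⟩
  have hG := (G_concave hp ht).2 hxt hyt (by norm_num : (0:ℝ) ≤ 1/2)
    (by norm_num : (0:ℝ) ≤ 1/2) (by norm_num)
  simp only [smul_eq_mul] at hG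
  have ex : (x^t)^(1/t) = x := by
    rw [← Real.rpow_mul hx.1.le, mul_one_div, div_self ht0.ne', Real.rpow_one]
  have ey : (y^t)^(1/t) = y := by
    rw [← Real.rpow_mul hy.1.le, mul_one_div, div_self ht0.ne', Real.rpow_one]
  have earg : 1/2 * x^t + 1/2 * y^t = (x^t + y^t)/2 := by ring
  rw [ex, ey, earg] at hG
  set m := ((x^t + y^t)/2) ^ (1/t) with hm
  have hm0 : 0 < m := Real.rpow_pos_of_pos (by nlinarith [hxt.1, hyt.1]) _
  have hFm : 0 ≤ arsinhp p m := (arsinhp_pos hp hm0).le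
  have hbase : (0:ℝ) ≤ (arsinhp p x ^ t + arsinhp p y ^ t)/2 := by
    have := Real.rpow_nonneg (arsinhp_pos hp hx.1).le t
    have := Real.rpow_nonneg (arsinhp_pos hp hy.1).le t
    linarith
  have hstep : (arsinhp p x ^ t + arsinhp p y ^ t)/2 ≤ (arsinhp p m) ^ t := by
    linarith
  calc ((arsinhp p x ^ t + arsinhp p y ^ t)/2) ^ (1/t)
      ≤ ((arsinhp p m) ^ t) ^ (1/t) := Real.rpow_le_rpow hbase hstep (by positivity)
    _ = arsinhp p m := by
        rw [← Real.rpow_mul hFm, mul_one_div, div_self ht0.ne', Real.rpow_one]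



theorem sinhp_powerMean_le (p t : ℝ) (hp : 1 < p) (ht : 1 ≤ t)
    (sinhp : ℝ → ℝ)
    (hmem : ∀ y ∈ Set.Ioo (0:ℝ) (arsinhp p 1), sinhp y ∈ Set.Ioo (0:ℝ) 1)
    (hinv : ∀ y ∈ Set.Ioo (0:ℝ) (arsinhp p 1), arsinhp p (sinhp y) = y)
    (r s : ℝ) (hr : r ∈ Set.Ioo (0:ℝ) (arsinhp p 1)) (hs : s ∈ Set.Ioo (0:ℝ) (arsinhp p 1)) :
    sinhp (powerMean t r s) ≤ powerMean t (sinhp r) (sinhp s) := by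
  have hp0 : (0:ℝ) < p := lt_trans one_pos hp
  have ht0 : (0:ℝ) < t := lt_of_lt_of_le one_pos ht
  have htne : t ≠ 0 := ht0.ne'
  obtain ⟨hr0, hrc⟩ := hr
  obtain ⟨hs0, hsc⟩ := hs
  have hx : sinhp r ∈ Ioo (0:ℝ) 1 := hmem r ⟨hr0, hrc⟩
  have hy : sinhp s ∈ Ioo (0:ℝ) 1 := hmem s ⟨hs0, hsc⟩
  have hFx : arsinhp p (sinhp r) = r := hinv r ⟨hr0, hrc⟩
  have hFy : arsinhp p (sinhp s) = s := hinv s ⟨hs0, hsc⟩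
  have hpm : powerMean t r s = ((r^t + s^t)/2) ^ (1/t) := by rw [powerMean, if_neg htne]
  have hrt : 0 < r^t := Real.rpow_pos_of_pos hr0 t
  have hst : 0 < s^t := Real.rpow_pos_of_pos hs0 t
  have hM0 : 0 < powerMean t r s := by
    rw [hpm]; apply Real.rpow_pos_of_pos; linarith
  have hMlt : powerMean t r s < arsinhp p 1 := by
    rw [hpm]
    have h1 : r^t ≤ (max r s)^t := Real.rpow_le_rpow hr0.le (le_max_left r s) ht0.le
    have h2 : s^t ≤ (max r s)^t := Real.rpow_le_rpow hs0.le (le_max_right r s) ht0.le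
    have hmax0 : 0 < max r s := lt_max_of_lt_left hr0
    have h3 : ((r^t + s^t)/2)^(1/t) ≤ ((max r s)^t)^(1/t) :=
      Real.rpow_le_rpow (by linarith) (by linarith) (by positivity)
    have heq : ((max r s)^t)^(1/t) = max r s := by
      rw [← Real.rpow_mul hmax0.le, mul_one_div, div_self htne, Real.rpow_one]
    rw [heq] at h3
    exact lt_of_le_of_lt h3 (max_lt hrc hsc)
  have hMmem : powerMean t r s ∈ Ioo (0:ℝ) (arsinhp p 1) := ⟨hM0, hMlt⟩
  have hz : sinhp (powerMean t r s) ∈ Ioo (0:ℝ) 1 := hmem _ hMmem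
  have hFz : arsinhp p (sinhp (powerMean t r s)) = powerMean t r s := hinv _ hMmem
  have hkey := key hp0 ht hx hy
  rw [hFx, hFy] at hkey
  have hpm2 : powerMean t (sinhp r) (sinhp s) = ((sinhp r^t + sinhp s^t)/2) ^ (1/t) := by
    rw [powerMean, if_neg htne]
  have hm0 : 0 < ((sinhp r^t + sinhp s^t)/2) ^ (1/t) := by
    have h1 : 0 < sinhp r ^ t := Real.rpow_pos_of_pos hx.1 t
    have h2 : 0 < sinhp s ^ t := Real.rpow_pos_of_pos hy.1 t
    apply Real.rpow_pos_of_pos; linarith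
  rw [hpm2]
  by_contra hlt
  push_neg at hlt
  have h2 := arsinhp_strictMonoOn hp0 (Set.mem_Ici.mpr hm0.le)
    (Set.mem_Ici.mpr hz.1.le) hlt
  rw [hFz, hpm] at h2
  linarith
end

section
/- For every m ≥ -1 and p > 1, the function f₁(x) = (arcsin_p(x)/x)^m · (1 - x^p)^{-1/p} is increasing on (0,1). -/
open Real Set

section aux

variable {p : ℝ}

lemma one_sub_rpow_pos (hp : 1 < p) {u : ℝ} (hu : u ∈ Set.Ioo (-1:ℝ) 1) :
    0 < 1 - u ^ p := by
  have h1 : |u ^ p| ≤ |u| ^ p := Real.abs_rpow_le_abs_rpow u p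
  have h2 : |u| ^ p < 1 := by
    rcases eq_or_ne u 0 with rfl | hu0
    · rw [abs_zero, Real.zero_rpow (by positivity)]; norm_num
    · exact Real.rpow_lt_one (abs_nonneg u) (abs_lt.2 ⟨hu.1, hu.2⟩) (by linarith)
  have := (abs_le.1 h1).2
  linarith

lemma phi_contAt (hp : 1 < p) {u : ℝ} (hu : u ∈ Set.Ioo (-1:ℝ) 1) :
    ContinuousAt (fun u : ℝ => (1 - u ^ p) ^ (-(1 / p))) u := by
  have h1 : ContinuousAt (fun u : ℝ => 1 - u ^ p) u :=
    continuousAt_const.sub (Real.continuousAt_rpow_const _ _ (Or.inr (by linarith)))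
  exact h1.rpow_const (Or.inl (one_sub_rpow_pos hp hu).ne')

lemma phi_meas (hp : 1 < p) {x : ℝ} (hx : x ∈ Set.Ioo (-1:ℝ) 1) :
    StronglyMeasurableAtFilter (fun u : ℝ => (1 - u ^ p) ^ (-(1 / p))) (nhds x)
      MeasureTheory.volume := by
  refine ContinuousAt.stronglyMeasurableAtFilter isOpen_Ioo ?_ x hx
  exact fun u hu => phi_contAt hp hu

lemma phi_intble (hp : 1 < p) {x : ℝ} (hx : x ∈ Set.Ico (0:ℝ) 1) :
    IntervalIntegrable (fun u : ℝ => (1 - u ^ p) ^ (-(1 / p))) MeasureTheory.volume 0 x := by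
  apply ContinuousOn.intervalIntegrable
  intro u hu
  rw [Set.uIcc_of_le hx.1] at hu
  exact (phi_contAt hp ⟨by linarith [hu.1], lt_of_le_of_lt hu.2 hx.2⟩).continuousWithinAt

lemma hasDerivAt_arcsinp (hp : 1 < p) {x : ℝ} (hx : x ∈ Set.Ico (0:ℝ) 1) :
    HasDerivAt (arcsinp p) ((1 - x ^ p) ^ (-(1 / p))) x := by
  exact intervalIntegral.integral_hasDerivAt_right (phi_intble hp hx)
    (phi_meas hp ⟨by linarith [hx.1], hx.2⟩)
    (phi_contAt hp ⟨by linarith [hx.1], hx.2⟩)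

lemma phi_strictMono (hp : 1 < p) {u v : ℝ} (hu : 0 ≤ u) (huv : u < v) (hv : v < 1) :
    (1 - u ^ p) ^ (-(1 / p)) < (1 - v ^ p) ^ (-(1 / p)) := by
  have hp0 : 0 < p := by linarith
  have h1 : u ^ p < v ^ p := Real.rpow_lt_rpow hu huv hp0
  have h2 : 0 < 1 - v ^ p := one_sub_rpow_pos hp ⟨by linarith, hv⟩
  exact Real.rpow_lt_rpow_of_neg h2 (by linarith) (by rw [neg_lt, neg_zero]; positivity)

lemma arcsinp_pos (hp : 1 < p) {x : ℝ} (hx : x ∈ Set.Ioo (0:ℝ) 1) :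
    0 < arcsinp p x := by
  apply intervalIntegral.intervalIntegral_pos_of_pos_on
    (phi_intble hp ⟨hx.1.le, hx.2⟩) _ hx.1
  intro u hu
  exact Real.rpow_pos_of_pos (one_sub_rpow_pos hp ⟨by linarith [hu.1], lt_trans hu.2 hx.2⟩) _

lemma arcsinp_lt (hp : 1 < p) {x : ℝ} (hx : x ∈ Set.Ioo (0:ℝ) 1) :
    arcsinp p x < x * (1 - x ^ p) ^ (-(1 / p)) := by
  have key : arcsinp p x < ∫ u in (0:ℝ)..x, (1 - x ^ p) ^ (-(1 / p)) := by
    apply intervalIntegral.integral_lt_integral_of_continuousOn_of_le_of_exists_lt hx.1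
    · intro u hu
      exact (phi_contAt hp ⟨by linarith [hu.1], lt_of_le_of_lt hu.2 hx.2⟩).continuousWithinAt
    · exact continuousOn_const
    · intro u hu
      rcases eq_or_lt_of_le hu.2 with rfl | h
      · exact le_refl _
      · exact (phi_strictMono hp (by linarith [hu.1]) h hx.2).le
    · exact ⟨0, ⟨le_refl _, hx.1.le⟩, phi_strictMono hp le_rfl hx.1 hx.2⟩
  rwa [intervalIntegral.integral_const, smul_eq_mul, sub_zero] at key

end aux

section key

variable {p : ℝ}

lemma hasDerivAt_psi (hp : 1 < p) {x : ℝ} (hx : x ∈ Set.Ioo (0:ℝ) 1) :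
    HasDerivAt (fun x : ℝ => x * (1 - x ^ p) * (1 - x ^ p) ^ (-(1 / p)))
      ((1 - p * x ^ p) * (1 - x ^ p) ^ (-(1 / p))) x := by
  have hp0 : (0:ℝ) < p := by linarith
  have hx0 : 0 < x := hx.1
  have ht : 0 < 1 - x ^ p := one_sub_rpow_pos hp ⟨by linarith, hx.2⟩
  have hxp : HasDerivAt (fun x : ℝ => x ^ p) (p * x ^ (p - 1)) x :=
    Real.hasDerivAt_rpow_const (Or.inl hx0.ne')
  have h1 : HasDerivAt (fun x : ℝ => 1 - x ^ p) (-(p * x ^ (p - 1))) x := hxp.const_sub 1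
  have h2 : HasDerivAt (fun x : ℝ => (1 - x ^ p) ^ (-(1 / p)))
      (-(p * x ^ (p - 1)) * (-(1 / p)) * (1 - x ^ p) ^ (-(1 / p) - 1)) x :=
    h1.rpow_const (Or.inl ht.ne')
  have h3 := ((hasDerivAt_id x).mul h1).mul h2
  refine h3.congr_deriv (Eq.symm ?_)
  have e1 : x ^ (p - 1) * x = x ^ p := by
    rw [← Real.rpow_add_one hx0.ne' (p - 1)]; ring_nf
  have e2 : (1 - x ^ p) ^ (-(1 / p) - 1) * (1 - x ^ p) = (1 - x ^ p) ^ (-(1 / p)) := by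
    rw [← Real.rpow_add_one ht.ne' (-(1 / p) - 1)]; ring_nf
  simp only [id_eq, Pi.mul_apply]
  rw [show -(p * x ^ (p - 1)) * -(1 / p) = x ^ (p - 1) by field_simp]
  linear_combination ((p - 1) * (1 - x ^ p) ^ (-(1 / p))) * e1 - x ^ (p - 1) * x * e2

lemma arcsinp_gt (hp : 1 < p) {x : ℝ} (hx : x ∈ Set.Ioo (0:ℝ) 1) :
    x * (1 - x ^ p) * (1 - x ^ p) ^ (-(1 / p)) < arcsinp p x := by
  have hp0 : (0:ℝ) < p := by linarith
  set G := fun x : ℝ => arcsinp p x - x * (1 - x ^ p) * (1 - x ^ p) ^ (-(1 / p)) with hG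
  have hψc : ∀ y ∈ Set.Ico (0:ℝ) 1,
      ContinuousAt (fun x : ℝ => x * (1 - x ^ p) * (1 - x ^ p) ^ (-(1 / p))) y := by
    intro y hy
    have h1 : ContinuousAt (fun x : ℝ => 1 - x ^ p) y :=
      continuousAt_const.sub (Real.continuousAt_rpow_const _ _ (Or.inr hp0.le))
    exact (continuousAt_id.mul h1).mul
      (h1.rpow_const (Or.inl (one_sub_rpow_pos hp ⟨by linarith [hy.1], hy.2⟩).ne'))
  have hmono : StrictMonoOn G (Set.Ico 0 1) := by
    apply strictMonoOn_of_deriv_pos (convex_Ico 0 1)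
    · intro y hy
      exact ((hasDerivAt_arcsinp hp hy).continuousAt.sub (hψc y hy)).continuousWithinAt
    · intro y hy
      rw [interior_Ico] at hy
      have hd : HasDerivAt G (p * y ^ p * (1 - y ^ p) ^ (-(1 / p))) y := by
        have := (hasDerivAt_arcsinp hp ⟨hy.1.le, hy.2⟩).sub (hasDerivAt_psi hp hy)
        refine this.congr_deriv (Eq.symm ?_); ring
      rw [hd.deriv]
      have := one_sub_rpow_pos hp (⟨by linarith [hy.1], hy.2⟩ : y ∈ Set.Ioo (-1:ℝ) 1)
      have hyp : 0 < y ^ p := Real.rpow_pos_of_pos hy.1 p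
      positivity
  have h0 : G 0 = 0 := by
    simp [hG, arcsinp]
  have := hmono (⟨le_refl 0, one_pos⟩ : (0:ℝ) ∈ Set.Ico (0:ℝ) 1) ⟨hx.1.le, hx.2⟩ hx.1
  rw [h0] at this
  simp only [hG] at this
  linarith

end key

theorem arcsinp_aux_strictMono (m p : ℝ) (hm : -1 ≤ m) (hp : 1 < p) :
    StrictMonoOn (fun x : ℝ => (arcsinp p x / x) ^ m * (1 - x ^ p) ^ (-(1 / p)))
      (Set.Ioo (0:ℝ) 1) := by
  have hp0 : (0:ℝ) < p := by linarith
  have main : ∀ x ∈ Set.Ioo (0:ℝ) 1, ∃ d,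
      HasDerivAt (fun x : ℝ => (arcsinp p x / x) ^ m * (1 - x ^ p) ^ (-(1 / p))) d x ∧
      0 < d := by
    intro x hx
    have hx0 : 0 < x := hx.1
    have ht : 0 < 1 - x ^ p := one_sub_rpow_pos hp ⟨by linarith, hx.2⟩
    have hC : 0 < (1 - x ^ p) ^ (-(1 / p)) := Real.rpow_pos_of_pos ht _
    have hApos : 0 < arcsinp p x := arcsinp_pos hp hx
    have hgpos : 0 < arcsinp p x / x := div_pos hApos hx0
    have hA : HasDerivAt (arcsinp p) ((1 - x ^ p) ^ (-(1 / p))) x :=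
      hasDerivAt_arcsinp hp ⟨hx0.le, hx.2⟩
    have hq : HasDerivAt (fun x : ℝ => arcsinp p x / x)
        (((1 - x ^ p) ^ (-(1 / p)) * x - arcsinp p x * 1) / x ^ 2) x :=
      hA.div (hasDerivAt_id x) hx0.ne'
    have hr := hq.rpow_const (Or.inl hgpos.ne') (p := m)
    have hxp : HasDerivAt (fun x : ℝ => x ^ p) (p * x ^ (p - 1)) x :=
      Real.hasDerivAt_rpow_const (Or.inl hx0.ne')
    have h1 : HasDerivAt (fun x : ℝ => 1 - x ^ p) (-(p * x ^ (p - 1))) x := hxp.const_sub 1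
    have hφ := h1.rpow_const (Or.inl ht.ne') (p := -(1 / p))
    refine ⟨_, hr.mul hφ, ?_⟩
    -- abbreviations
    set A := arcsinp p x with hAdef
    set C := (1 - x ^ p) ^ (-(1 / p)) with hCdef
    set B := (A / x) ^ (m - 1) with hBdef
    set a := x ^ (p - 1) with hadef
    set S := (1 - x ^ p) ^ (-(1 / p) - 1) with hSdef
    have hB : 0 < B := Real.rpow_pos_of_pos hgpos _
    have hS : 0 < S := Real.rpow_pos_of_pos ht _
    have ha : 0 < a := Real.rpow_pos_of_pos hx0 _
    have e1 : a * x = x ^ p := by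
      rw [hadef, ← Real.rpow_add_one hx0.ne' (p - 1)]; ring_nf
    have e2 : S * (1 - x ^ p) = C := by
      rw [hSdef, hCdef, ← Real.rpow_add_one ht.ne' (-(1 / p) - 1)]; ring_nf
    have e3 : (A / x) ^ m = B * (A / x) := by
      rw [hBdef, ← Real.rpow_add_one hgpos.ne' (m - 1), sub_add_cancel]
    have hlt : A < x * C := arcsinp_lt hp hx
    have hkey : x * (1 - x ^ p) * C < A := arcsinp_gt hp hx
    have hmono : -(C * x - A) ≤ m * (C * x - A) := by nlinarith
    have trans : (C * x - A * 1) / x ^ 2 * m * B * C + (A / x) ^ m * (-(p * a) * -(1 / p) * S)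
        = B * C / (x ^ 2 * (1 - x ^ p)) * (m * (C * x - A) * (1 - x ^ p) + A * (a * x)) := by
      rw [e3]
      have es : S = C / (1 - x ^ p) := by rw [← e2]; field_simp
      rw [es]
      field_simp
    rw [trans, e1]
    have pos2 : 0 < m * (C * x - A) * (1 - x ^ p) + A * x ^ p := by nlinarith
    exact mul_pos (div_pos (mul_pos hB hC) (by positivity)) pos2
  apply strictMonoOn_of_deriv_pos (convex_Ioo 0 1)
  · intro x hx
    exact (main x hx).choose_spec.1.continuousAt.continuousWithinAt
  · intro x hx
    rw [interior_Ioo] at hx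
    obtain ⟨d, hd, hd0⟩ := main x hx
    exact hd.deriv ▸ hd0
end

section
/- For every m ≥ -1 and p > 1, the function f₂(x) = (artanh_p(x)/x)^m · (1 - x^p)^{-1} is increasing on (0,1). -/
open Real Set

section ArtanhpAux

open MeasureTheory

variable {p : ℝ}

private lemma artanhp_rpow_cont (hp : 0 < p) : Continuous fun u : ℝ => u ^ p :=
  continuous_iff_continuousAt.2 fun u => Real.continuousAt_rpow_const u p (Or.inr hp.le)

private lemma artanhp_one_sub_pos_of_mem (hp : 0 < p) {u : ℝ} (hu : u ∈ Ioo (-1:ℝ) 1) :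
    0 < 1 - u ^ p := by
  have h1 : |u ^ p| ≤ |u| ^ p := Real.abs_rpow_le_abs_rpow u p
  have h2 : |u| ^ p < 1 := Real.rpow_lt_one (abs_nonneg u) (abs_lt.2 ⟨hu.1, hu.2⟩) hp
  have h3 : u ^ p ≤ |u ^ p| := le_abs_self _
  linarith

private lemma artanhp_gContAt (hp : 0 < p) :
    ∀ u ∈ Ioo (-1:ℝ) 1, ContinuousAt (fun u : ℝ => (1 - u ^ p)⁻¹) u := by
  intro u hu
  exact ((continuous_const.sub (artanhp_rpow_cont hp)).continuousAt).inv₀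
    (ne_of_gt (artanhp_one_sub_pos_of_mem hp hu))

private lemma artanhp_icc_subset {x : ℝ} (hx : x ∈ Ico (0:ℝ) 1) :
    Icc (0:ℝ) x ⊆ Ioo (-1:ℝ) 1 := by
  intro u hu
  constructor <;> [linarith [hu.1]; linarith [hu.2, hx.2]]

private lemma artanhp_intg (hp : 0 < p) {x : ℝ} (hx : x ∈ Ico (0:ℝ) 1) :
    IntervalIntegrable (fun u : ℝ => (1 - u ^ p)⁻¹) volume 0 x := by
  apply ContinuousOn.intervalIntegrable
  rw [uIcc_of_le hx.1]
  exact fun u hu => ((artanhp_gContAt hp u (artanhp_icc_subset hx hu)).continuousWithinAt)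

private lemma hasDeriv_artanhp (hp : 0 < p) {x : ℝ} (hx : x ∈ Ioo (0:ℝ) 1) :
    HasDerivAt (artanhp p) (1 - x ^ p)⁻¹ x := by
  have hx' : x ∈ Ioo (-1:ℝ) 1 := ⟨by linarith [hx.1], hx.2⟩
  exact intervalIntegral.integral_hasDerivAt_right (artanhp_intg hp ⟨hx.1.le, hx.2⟩)
    (ContinuousAt.stronglyMeasurableAtFilter isOpen_Ioo (artanhp_gContAt hp) x hx')
    (artanhp_gContAt hp x hx')

private lemma le_artanhp (hp : 0 < p) {x : ℝ} (hx : x ∈ Ioo (0:ℝ) 1) : x ≤ artanhp p x := by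
  have h : ∫ u in (0:ℝ)..x, (1:ℝ) ≤ ∫ u in (0:ℝ)..x, (1 - u ^ p)⁻¹ := by
    apply intervalIntegral.integral_mono_on hx.1.le intervalIntegrable_const
      (artanhp_intg hp ⟨hx.1.le, hx.2⟩)
    intro u hu
    have h1 : 0 < 1 - u ^ p :=
      artanhp_one_sub_pos_of_mem hp (artanhp_icc_subset ⟨hx.1.le, hx.2⟩ hu)
    have h2 : 1 - u ^ p ≤ 1 := by
      have := Real.rpow_nonneg hu.1 p
      linarith
    exact one_le_inv_iff₀.2 ⟨h1, h2⟩
  simpa [artanhp] using h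

private lemma artanhp_pos (hp : 0 < p) {x : ℝ} (hx : x ∈ Ioo (0:ℝ) 1) : 0 < artanhp p x :=
  lt_of_lt_of_le hx.1 (le_artanhp hp hx)

private lemma artanhp_le (hp : 0 < p) {x : ℝ} (hx : x ∈ Ioo (0:ℝ) 1) :
    artanhp p x ≤ x * (1 - x ^ p)⁻¹ := by
  have h : ∫ u in (0:ℝ)..x, (1 - u ^ p)⁻¹ ≤ ∫ u in (0:ℝ)..x, (1 - x ^ p)⁻¹ := by
    apply intervalIntegral.integral_mono_on hx.1.le (artanhp_intg hp ⟨hx.1.le, hx.2⟩)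
      intervalIntegrable_const
    intro u hu
    have hux : u ^ p ≤ x ^ p := Real.rpow_le_rpow hu.1 hu.2 hp.le
    have h1 : 0 < 1 - x ^ p := by
      have := Real.rpow_lt_one (le_trans hu.1 hu.2) hx.2 hp
      linarith
    exact inv_anti₀ h1 (by linarith)
  simpa [artanhp, smul_eq_mul] using h

private lemma artanhp_one_sub_pos' (hp : 0 < p) {x : ℝ} (hx : x ∈ Ioo (0:ℝ) 1) :
    0 < 1 - x ^ p := by
  have := Real.rpow_lt_one hx.1.le hx.2 hp
  linarith

private lemma artanhp_monoG (hp : 0 < p) :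
    MonotoneOn (fun x : ℝ => artanhp p x / x) (Ioo (0:ℝ) 1) := by
  have hD : ∀ x ∈ Ioo (0:ℝ) 1, HasDerivAt (fun x : ℝ => artanhp p x / x)
      (((1 - x ^ p)⁻¹ * x - artanhp p x * 1) / x ^ 2) x := fun x hx =>
    (hasDeriv_artanhp hp hx).div (hasDerivAt_id x) (ne_of_gt hx.1)
  apply monotoneOn_of_deriv_nonneg (convex_Ioo 0 1)
  · exact fun x hx => ((hD x hx).continuousAt).continuousWithinAt
  · rw [interior_Ioo]
    exact fun x hx => ((hD x hx).differentiableAt).differentiableWithinAt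
  · rw [interior_Ioo]
    intro x hx
    rw [(hD x hx).deriv]
    have h1 := artanhp_le hp hx
    apply div_nonneg _ (sq_nonneg x)
    nlinarith [mul_comm x (1 - x ^ p)⁻¹]

private lemma artanhp_strictMonoB (hp : 1 < p) :
    StrictMonoOn (fun x : ℝ => x / ((1 - x ^ p) * artanhp p x)) (Ioo (0:ℝ) 1) := by
  have hp0 : (0:ℝ) < p := by linarith
  have hD : ∀ x ∈ Ioo (0:ℝ) 1, HasDerivAt (fun x : ℝ => (1 - x ^ p) * artanhp p x)
      ((0 - p * x ^ (p - 1)) * artanhp p x + (1 - x ^ p) * (1 - x ^ p)⁻¹) x := by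
    intro x hx
    exact ((hasDerivAt_const x 1).sub
      (Real.hasDerivAt_rpow_const (Or.inl (ne_of_gt hx.1)))).mul (hasDeriv_artanhp hp0 hx)
  have hB : ∀ x ∈ Ioo (0:ℝ) 1, HasDerivAt (fun x : ℝ => x / ((1 - x ^ p) * artanhp p x))
      ((1 * ((1 - x ^ p) * artanhp p x) - x * ((0 - p * x ^ (p - 1)) * artanhp p x
        + (1 - x ^ p) * (1 - x ^ p)⁻¹)) / ((1 - x ^ p) * artanhp p x) ^ 2) x := by
    intro x hx
    exact (hasDerivAt_id x).div (hD x hx)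
      (mul_ne_zero (ne_of_gt (artanhp_one_sub_pos' hp0 hx)) (ne_of_gt (artanhp_pos hp0 hx)))
  apply strictMonoOn_of_deriv_pos (convex_Ioo 0 1)
  · exact fun x hx => ((hB x hx).continuousAt).continuousWithinAt
  · rw [interior_Ioo]
    intro x hx
    rw [(hB x hx).deriv]
    have h1 : 0 < 1 - x ^ p := artanhp_one_sub_pos' hp0 hx
    have hT : 0 < artanhp p x := artanhp_pos hp0 hx
    have hTx : x ≤ artanhp p x := le_artanhp hp0 hx
    have hxp : 0 < x ^ p := Real.rpow_pos_of_pos hx.1 p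
    have hxx : x ^ (p - 1) * x = x ^ p := by
      rw [← Real.rpow_add_one (ne_of_gt hx.1) (p - 1), sub_add_cancel]
    have hcancel : (1 - x ^ p) * (1 - x ^ p)⁻¹ = 1 := mul_inv_cancel₀ (ne_of_gt h1)
    apply div_pos _ (by positivity)
    rw [hcancel]
    have hc : 0 ≤ 1 + (p - 1) * x ^ p := by nlinarith
    have hmul := mul_le_mul_of_nonneg_right hTx hc
    have key : 0 < artanhp p x * (1 + (p - 1) * x ^ p) - x := by
      nlinarith [mul_pos (mul_pos (sub_pos.2 hp) hxp) hx.1]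
    have heq : 1 * ((1 - x ^ p) * artanhp p x)
        - x * ((0 - p * x ^ (p - 1)) * artanhp p x + 1)
        = artanhp p x * (1 + (p - 1) * x ^ p) - x := by
      rw [← hxx]; ring
    rw [heq]; exact key

end ArtanhpAux

theorem artanhp_aux_strictMono (m p : ℝ) (hm : -1 ≤ m) (hp : 1 < p) :
    StrictMonoOn (fun x : ℝ => (artanhp p x / x) ^ m * (1 - x ^ p)⁻¹)
      (Set.Ioo (0:ℝ) 1) := by
  have hp0 : (0:ℝ) < p := by linarith
  have key : ∀ z ∈ Ioo (0:ℝ) 1, (artanhp p z / z) ^ m * (1 - z ^ p)⁻¹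
      = (artanhp p z / z) ^ (m + 1) * (z / ((1 - z ^ p) * artanhp p z)) := by
    intro z hz
    have hz1 : 0 < 1 - z ^ p := artanhp_one_sub_pos' hp0 hz
    have hT : 0 < artanhp p z := artanhp_pos hp0 hz
    have hG : 0 < artanhp p z / z := div_pos hT hz.1
    rw [Real.rpow_add hG m 1, Real.rpow_one, mul_assoc]
    congr 1
    rw [eq_comm, div_mul_div_comm,
      div_eq_iff (ne_of_gt (mul_pos hz.1 (mul_pos hz1 hT)))]
    rw [show (1 - z ^ p)⁻¹ * (z * ((1 - z ^ p) * artanhp p z))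
        = ((1 - z ^ p)⁻¹ * (1 - z ^ p)) * (z * artanhp p z) by ring,
      inv_mul_cancel₀ hz1.ne', one_mul]
    ring
  intro x hx y hy hxy
  simp only
  rw [key x hx, key y hy]
  have hGx : 0 < artanhp p x / x := div_pos (artanhp_pos hp0 hx) hx.1
  have hA : (artanhp p x / x) ^ (m + 1) ≤ (artanhp p y / y) ^ (m + 1) :=
    Real.rpow_le_rpow hGx.le (artanhp_monoG hp0 hx hy hxy.le) (by linarith)
  have hApos : 0 < (artanhp p x / x) ^ (m + 1) := Real.rpow_pos_of_pos hGx _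
  have hBlt : x / ((1 - x ^ p) * artanhp p x) < y / ((1 - y ^ p) * artanhp p y) :=
    artanhp_strictMonoB hp hx hy hxy
  have hBypos : 0 < y / ((1 - y ^ p) * artanhp p y) :=
    div_pos hy.1 (mul_pos (artanhp_one_sub_pos' hp0 hy) (artanhp_pos hp0 hy))
  calc (artanhp p x / x) ^ (m + 1) * (x / ((1 - x ^ p) * artanhp p x))
      < (artanhp p x / x) ^ (m + 1) * (y / ((1 - y ^ p) * artanhp p y)) :=
        mul_lt_mul_of_pos_left hBlt hApos
    _ ≤ (artanhp p y / y) ^ (m + 1) * (y / ((1 - y ^ p) * artanhp p y)) :=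
        mul_le_mul_of_nonneg_right hA hBypos.le
end
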